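/- The 9-vertex simple graph consisting of a 4-cycle v1-v2-v3-v4-v1, four further vertices w1, w2, w3, w4 where wi is adjacent exactly to vi and v_{i+1} (indices modulo 4) and to a ninth central vertex c, with c adjacent exactly to w1, w2, w3, w4 (the unique planar graph of diameter 2 with domination number 3), is not an underlying push clique. -/

import Mathlib

/-- A directed graph `A` on `V` is an oriented graph: irreflexive and asymmetric. -/
def IsOriented {V : Type*} (A : V → V → Prop) : Prop :=
  (∀ v, ¬ A v v) ∧ ∀ u v, A u v → ¬ A v u

/-- `u` and `v` are adjacent in `A`. -/
def Adj {V : Type*} (A : V → V → Prop) (u v : V) : Prop :=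
  A u v ∨ A v u

/-- The push of `A` by the vertex set `S`: arcs with exactly one endpoint in `S`
are reversed. -/
def push {V : Type*} (S : Set V) (A : V → V → Prop) (u v : V) : Prop :=
  (Xor' (u ∈ S) (v ∈ S) ∧ A v u) ∨ (¬ Xor' (u ∈ S) (v ∈ S) ∧ A u v)

/-- `u` and `v` agree on `w`. -/
def AgreeOn {V : Type*} (A : V → V → Prop) (u v w : V) : Prop :=
  (A w u ∧ A w v) ∨ (A u w ∧ A v w)

/-- `u` and `v` disagree on `w`. -/
def DisagreeOn {V : Type*} (A : V → V → Prop) (u v w : V) : Prop :=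
  (A u w ∧ A w v) ∨ (A w u ∧ A v w)

/-- `u` and `v` are joined by a directed 2-path in `A`. -/
def TwoPath {V : Type*} (A : V → V → Prop) (u v : V) : Prop :=
  ∃ w, (A u w ∧ A w v) ∨ (A v w ∧ A w u)

/-- `A` is an oriented clique: any two distinct vertices are adjacent or joined
by a directed 2-path. -/
def IsOrientedClique {V : Type*} (A : V → V → Prop) : Prop :=
  ∀ u v, u ≠ v → Adj A u v ∨ TwoPath A u v

/-- `A` is a push clique: every push of `A` is an oriented clique. -/
def IsPushClique {V : Type*} (A : V → V → Prop) : Prop :=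
  ∀ S : Set V, IsOrientedClique (push S A)

/-- `A` is an orientation of the simple graph `G`. -/
def IsOrientationOf {V : Type*} (A : V → V → Prop) (G : SimpleGraph V) : Prop :=
  IsOriented A ∧ ∀ u v, Adj A u v ↔ G.Adj u v

/-- `G` is an underlying push clique. -/
def IsUnderlyingPushClique {V : Type*} (G : SimpleGraph V) : Prop :=
  ∃ A : V → V → Prop, IsOrientationOf A G ∧ IsPushClique A

/-- `G` is an underlying oriented clique. -/
def IsUnderlyingOrientedClique {V : Type*} (G : SimpleGraph V) : Prop :=
  ∃ A : V → V → Prop, IsOrientationOf A G ∧ IsOrientedClique A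


/-! In a push clique, two non-adjacent vertices `u`, `v` have at least two common neighbours:
if `w` were the only one, `u` and `v` would have to disagree on `w` (to be joined by a
2-path), but pushing `u` alone reverses exactly the arcs at `u`, after which they agree
on `w`, so no push can make both hold. In the graph at hand, `w₀` and `w₂` are non-adjacent
with `c` as their only common neighbour. -/

variable {V : Type*} {A : V → V → Prop} {S : Set V} {u v w : V}

theorem push_apply_of_xor (h : Xor (u ∈ S) (v ∈ S)) : push S A u v ↔ A v u :=
  ⟨fun h' => h'.elim And.right fun h' => absurd h h'.1, fun h' => .inl ⟨h, h'⟩⟩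

theorem push_apply_of_not_xor (h : ¬ Xor (u ∈ S) (v ∈ S)) : push S A u v ↔ A u v :=
  ⟨fun h' => h'.elim (fun h' => absurd h'.1 h) And.right, fun h' => .inr ⟨h, h'⟩⟩

theorem push_empty : push ∅ A = A := by
  ext u v
  exact push_apply_of_not_xor (by simp [Xor])

theorem adj_push : Adj (push S A) u v ↔ Adj A u v := by
  by_cases h : Xor (u ∈ S) (v ∈ S)
  · simp only [Adj, push_apply_of_xor h, push_apply_of_xor (by rwa [_root_.xor_comm]), or_comm]
  · simp only [Adj, push_apply_of_not_xor h, push_apply_of_not_xor (by rwa [_root_.xor_comm])]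

theorem disagreeOn_push_singleton (hwu : w ≠ u) (hvu : v ≠ u) :
    DisagreeOn (push {u} A) u v w ↔ AgreeOn A u v w := by
  have huw : Xor (u ∈ ({u} : Set V)) (w ∈ ({u} : Set V)) := by simp [Xor, hwu]
  have hwv : ¬ Xor (w ∈ ({u} : Set V)) (v ∈ ({u} : Set V)) := by simp [Xor, hwu, hvu]
  rw [DisagreeOn, AgreeOn, push_apply_of_xor huw, push_apply_of_not_xor hwv,
    push_apply_of_xor (u := w) (v := u) (by rwa [_root_.xor_comm]),
    push_apply_of_not_xor (u := v) (v := w) (by rwa [_root_.xor_comm])]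

theorem IsOriented.not_disagreeOn_of_agreeOn (hA : IsOriented A) (h : AgreeOn A u v w) :
    ¬ DisagreeOn A u v w := by
  rcases h with ⟨h₁, h₂⟩ | ⟨h₁, h₂⟩ <;> rintro (⟨h₃, h₄⟩ | ⟨h₃, h₄⟩)
  exacts [hA.2 _ _ h₁ h₃, hA.2 _ _ h₂ h₄, hA.2 _ _ h₂ h₄, hA.2 _ _ h₁ h₃]

theorem IsOrientedClique.disagreeOn_of_unique_common_adj (hA : IsOrientedClique A)
    (huv : u ≠ v) (hadj : ¬ Adj A u v) (hw : ∀ x, Adj A u x → Adj A x v → x = w) :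
    DisagreeOn A u v w := by
  obtain ⟨x, hx⟩ := (hA u v huv).resolve_left hadj
  obtain rfl : x = w := by
    apply hw <;> rcases hx with ⟨h₁, h₂⟩ | ⟨h₁, h₂⟩
    exacts [.inl h₁, .inr h₂, .inl h₂, .inr h₁]
  exact hx.imp id And.symm

theorem IsPushClique.exists_common_adj_ne (hP : IsPushClique A) (hA : IsOriented A)
    (huv : u ≠ v) (hadj : ¬ Adj A u v) (w : V) : ∃ x, x ≠ w ∧ Adj A u x ∧ Adj A x v := by
  by_contra! h
  have hw : ∀ x, Adj A u x → Adj A x v → x = w := fun x h₁ h₂ => by_contra fun hx => h x hx h₁ h₂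
  have hdis : DisagreeOn A u v w := by
    have := hP ∅
    rw [push_empty] at this
    exact this.disagreeOn_of_unique_common_adj huv hadj hw
  have hpush : DisagreeOn (push {u} A) u v w :=
    (hP {u}).disagreeOn_of_unique_common_adj huv (by rwa [adj_push])
      (by simpa only [adj_push] using hw)
  have hwu : w ≠ u := by
    rintro rfl
    rcases hdis with ⟨h₁, -⟩ | ⟨h₁, -⟩ <;> exact hA.1 w h₁
  exact hA.not_disagreeOn_of_agreeOn ((disagreeOn_push_singleton hwu huv.symm).mp hpush) hdis

/-- The unique planar graph of diameter 2 with domination number 3: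
vertices are `Sum.inl i` (the `vᵢ`, forming a 4-cycle), `Sum.inr (Sum.inl i)`
(the `wᵢ`, with `wᵢ` adjacent exactly to `vᵢ`, `v_{i+1}` and `c`), and
`Sum.inr (Sum.inr ())` (the central vertex `c`, adjacent exactly to the
`wᵢ`). -/
theorem stmt_16 :
    ¬ IsUnderlyingPushClique
      (SimpleGraph.fromRel
        (fun u v : Fin 4 ⊕ (Fin 4 ⊕ Unit) =>
          match u, v with
          | Sum.inl i, Sum.inl j => j = i + 1
          | Sum.inr (Sum.inl i), Sum.inl j => j = i ∨ j = i + 1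
          | Sum.inr (Sum.inl _), Sum.inr (Sum.inr _) => True
          | _, _ => False)) := by
  rintro ⟨A, ⟨hA, hAG⟩, hP⟩
  obtain ⟨x, hxc, hx₀, hx₂⟩ := hP.exists_common_adj_ne hA (u := Sum.inr (Sum.inl 0))
    (v := Sum.inr (Sum.inl 2)) (by decide)
    (by rw [hAG, SimpleGraph.fromRel_adj]; decide) (Sum.inr (Sum.inr ()))
  rw [hAG] at hx₀ hx₂
  revert hxc hx₀ hx₂
  rcases x with i | i | ⟨⟨⟩⟩ <;> simp only [SimpleGraph.fromRel_adj]
  all_goals first | decide | (fin_cases i <;> decide)
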